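/- arXiv:math/0210101 — 3 statements merged into one kernel-verified Lean document; each statement's English description precedes it below -/
import Mathlib

section
/- Let I_Y ⊆ k[x_1,...,x_m,z_0,...,z_n] be a monomial ideal in x_1,...,x_m alone with radical (x_1,...,x_m) and Young diagram D. Then the Hilbert function of S/I_Y in degree d equals Σ_{B ∈ D} binom(n + d − w_B, n), where w_B is the weight of the box B and binom(n + e, n) is interpreted as 0 when e < 0; in particular the Hilbert polynomial of Y equals Σ_{B ∈ D} χ(O_{P^n}(d − w_B)). -/
open MvPolynomial

/-- The Hilbert function of the graded ring `S/I` in degree `d`: the `k`-dimension of the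
image of the space of degree-`d` homogeneous polynomials in `S/I`. -/
noncomputable def hilbertFunction {k : Type*} [Field k] {σ : Type*}
    (I : Ideal (MvPolynomial σ k)) (d : ℕ) : ℕ :=
  Module.finrank k
    ((MvPolynomial.homogeneousSubmodule σ k d).map (Ideal.Quotient.mkₐ k I).toLinearMap)

/-!
The images of the standard monomials (those not in `I`) of degree `d` form a basis of the
degree-`d` part of `S/I` when `I` is a monomial ideal. As the generators of `I` involve only the
`x`-variables, `x^B z^C` is standard exactly when `B` is a box of the diagram, whatever `C` is;
for a fixed box `B` the `z`-monomials `C` of degree `d - w_B` in `n + 1` variables are counted by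
stars and bars, giving `binom(n + d - w_B, n)`.
-/

namespace Finsupp

variable {σ τ : Type*}

theorem mapDomain_inl_le_iff {M : Type*} [AddCommMonoid M] [PartialOrder M]
    [CanonicallyOrderedAdd M] {g : σ →₀ M} {μ : σ ⊕ τ →₀ M} :
    mapDomain Sum.inl g ≤ μ ↔ g ≤ (sumFinsuppEquivProdFinsupp μ).1 := by
  simp only [le_def, Sum.forall, mapDomain_apply Sum.inl_injective,
    fst_sumFinsuppEquivProdFinsupp]
  simp [mapDomain_of_notMem_range]

theorem degree_sumElim {M : Type*} [AddCommMonoid M] (f : σ →₀ M) (g : τ →₀ M) :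
    (sumElim f g).degree = f.degree + g.degree := by
  classical
  simp only [degree_apply, sumElim_support, coe_sumElim, Finset.sum_disjSum, Sum.elim_inl,
    Sum.elim_inr]

theorem natCard_degree_eq [Fintype τ] (e : ℕ) :
    Nat.card {C : τ →₀ ℕ // C.degree = e} = (Fintype.card τ + e - 1).choose e := by
  classical
  rw [← Finset.card_univ, ← Finset.card_finsuppAntidiag_nat_eq_choose, ← Nat.card_eq_finsetCard]
  refine Nat.card_congr (Equiv.subtypeEquivRight fun C => ?_)
  simp [degree_eq_sum]

theorem natCard_degree_eq_and_fst_mem [Finite τ] (D : Finset (σ →₀ ℕ)) (d : ℕ) :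
    Nat.card {μ : σ ⊕ τ →₀ ℕ // μ.degree = d ∧ (sumFinsuppEquivProdFinsupp μ).1 ∈ D} =
      ∑ B ∈ D, Nat.card {C : τ →₀ ℕ // B.degree + C.degree = d} := by
  have hfin (B : σ →₀ ℕ) : Finite {C : τ →₀ ℕ // B.degree + C.degree = d} :=
    ((finite_of_degree_le d).subset fun C (hC : B.degree + C.degree = d) =>
      show C.degree ≤ d by omega).to_subtype
  let split : {μ : σ ⊕ τ →₀ ℕ // μ.degree = d ∧ (sumFinsuppEquivProdFinsupp μ).1 ∈ D} ≃
      {p : (σ →₀ ℕ) × (τ →₀ ℕ) // p.1 ∈ D ∧ p.1.degree + p.2.degree = d} :=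
    sumFinsuppEquivProdFinsupp.subtypeEquiv fun μ => by
      rw [← degree_sumElim, ← sumFinsuppEquivProdFinsupp_symm_apply, Equiv.symm_apply_apply,
        and_comm]
  let fibers : {p : (σ →₀ ℕ) × (τ →₀ ℕ) // p.1 ∈ D ∧ p.1.degree + p.2.degree = d} ≃
      Σ B : D, {C : τ →₀ ℕ // B.1.degree + C.degree = d} :=
    { toFun p := ⟨⟨p.1.1, p.2.1⟩, p.1.2, p.2.2⟩
      invFun x := ⟨(x.1, x.2.1), x.1.2, x.2.2⟩
      left_inv _ := rfl
      right_inv _ := rfl }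
  rw [Nat.card_congr (split.trans fibers), Nat.card_sigma, Finset.sum_coe_sort D
    (fun B => Nat.card {C : τ →₀ ℕ // B.degree + C.degree = d})]

theorem natCard_add_degree_eq (n w d : ℕ) :
    Nat.card {C : Fin (n + 1) →₀ ℕ // w + C.degree = d} =
      if w ≤ n + d then (n + d - w).choose n else 0 := by
  by_cases hwd : w ≤ d
  · have hC (C : Fin (n + 1) →₀ ℕ) : w + C.degree = d ↔ C.degree = d - w := by omega
    rw [if_pos (by omega), Nat.card_congr (Equiv.subtypeEquivRight hC), natCard_degree_eq,
      Fintype.card_fin, show n + d - w = n + (d - w) by omega,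
      show n + 1 + (d - w) - 1 = n + (d - w) by omega, Nat.choose_symm_add]
  · have : IsEmpty {C : Fin (n + 1) →₀ ℕ // w + C.degree = d} := ⟨fun C => by omega⟩
    rw [Nat.card_of_isEmpty]
    split_ifs
    · exact (Nat.choose_eq_zero_of_lt (by omega)).symm
    · rfl

end Finsupp

namespace MvPolynomial

variable {σ R : Type*} [CommSemiring R] [Nontrivial R] {A : Set (σ →₀ ℕ)}

theorem monomial_one_mem_span_monomial_iff {μ : σ →₀ ℕ} :
    monomial μ (1 : R) ∈ Ideal.span ((monomial · 1) '' A) ↔ ∃ a ∈ A, a ≤ μ := by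
  classical
  simp [mem_ideal_span_monomial_image, support_monomial]

theorem mem_span_monomial_iff_forall_monomial_mem {p : MvPolynomial σ R} :
    p ∈ Ideal.span ((monomial · 1) '' A) ↔
      ∀ μ ∈ p.support, monomial μ (1 : R) ∈ Ideal.span ((monomial · 1) '' A) := by
  rw [mem_ideal_span_monomial_image]
  simp only [monomial_one_mem_span_monomial_iff]

theorem monomial_one_mem_span_monomial_mapDomain_inl_iff {τ : Type*} {G : Set (σ →₀ ℕ)}
    {μ : σ ⊕ τ →₀ ℕ} :
    monomial μ (1 : R) ∈
        Ideal.span ((fun g => monomial (Finsupp.mapDomain Sum.inl g) (1 : R)) '' G) ↔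
      ∃ g ∈ G, g ≤ (Finsupp.sumFinsuppEquivProdFinsupp μ).1 := by
  rw [← Set.image_image (monomial · 1), monomial_one_mem_span_monomial_iff]
  simp [Finsupp.mapDomain_inl_le_iff]

end MvPolynomial

theorem hilbertFunction_eq_natCard {σ k : Type*} [Field k] (I : Ideal (MvPolynomial σ k))
    (hI : ∀ p, p ∈ I ↔ ∀ μ ∈ p.support, monomial μ (1 : k) ∈ I) (d : ℕ) :
    hilbertFunction I d = Nat.card {μ : σ →₀ ℕ // μ.degree = d ∧ monomial μ (1 : k) ∉ I} := by
  set S := {μ : σ →₀ ℕ | μ.degree = d ∧ monomial μ (1 : k) ∉ I}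
  set π := (Ideal.Quotient.mkₐ k I).toLinearMap
  set v : S → MvPolynomial σ k := fun μ => monomial μ.1 1
  have hv : Submodule.span k (Set.range v) = restrictSupport k S := by
    rw [restrictSupport_eq_span, Set.image_eq_range]
  -- a polynomial supported on standard monomials lies in `I` only if it is zero
  have hli : LinearIndependent k (π ∘ v) := by
    refine ((basisMonomials σ k).linearIndependent.comp _ Subtype.val_injective).map ?_
    rw [Submodule.disjoint_def]
    intro p hpS hpI
    rw [coe_basisMonomials] at hpS
    change p ∈ Submodule.span k (Set.range v) at hpS
    rw [hv, mem_restrictSupport_iff] at hpS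
    rw [LinearMap.mem_ker, AlgHom.toLinearMap_apply, Ideal.Quotient.mkₐ_eq_mk,
      Ideal.Quotient.eq_zero_iff_mem] at hpI
    rw [← support_eq_empty, Finset.eq_empty_iff_forall_notMem]
    exact fun μ hμ => (hpS hμ).2 ((hI p).1 hpI μ hμ)
  have hspan : Submodule.span k (Set.range (π ∘ v)) = (homogeneousSubmodule σ k d).map π := by
    rw [homogeneousSubmodule_eq_finsupp_supported, ← restrictSupport, restrictSupport_eq_span,
      Submodule.map_span]
    apply le_antisymm
    · refine Submodule.span_mono ?_
      rintro _ ⟨μ, rfl⟩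
      exact ⟨_, ⟨μ, μ.2.1, rfl⟩, rfl⟩
    · rw [Submodule.span_le]
      rintro _ ⟨_, ⟨μ, hμ, rfl⟩, rfl⟩
      by_cases hμI : monomial μ (1 : k) ∈ I
      · rw [SetLike.mem_coe, AlgHom.toLinearMap_apply, Ideal.Quotient.mkₐ_eq_mk,
          Ideal.Quotient.eq_zero_iff_mem.2 hμI]
        exact zero_mem _
      · exact Submodule.subset_span ⟨⟨μ, hμ, hμI⟩, rfl⟩
  rw [hilbertFunction, ← hspan, Module.finrank_eq_nat_card_basis (Module.Basis.span hli)]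
  rfl

theorem hilbert_function_eq_sum_over_diagram_general
    (k : Type*) [Field k] (m n : ℕ)
    (I : Ideal (MvPolynomial (Fin m ⊕ Fin (n + 1)) k))
    (hmono : ∃ G : Set (Fin m →₀ ℕ), I = Ideal.span
      ((fun p : Fin m →₀ ℕ => monomial (Finsupp.mapDomain Sum.inl p) (1 : k)) '' G))
    (hD : ({B : Fin m →₀ ℕ |
      monomial (Finsupp.mapDomain Sum.inl B) (1 : k) ∉ I}).Finite) (d : ℕ) :
    hilbertFunction I d =
      ∑ B ∈ hD.toFinset,
        (if (∑ i, B i) ≤ n + d then Nat.choose (n + d - ∑ i, B i) n else 0) := by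
  obtain ⟨G, hG⟩ := hmono
  have hmem (p : MvPolynomial (Fin m ⊕ Fin (n + 1)) k) :
      p ∈ I ↔ ∀ μ ∈ p.support, monomial μ (1 : k) ∈ I := by
    rw [hG, ← Set.image_image (monomial · 1)]
    exact mem_span_monomial_iff_forall_monomial_mem
  have hdiagram (μ : Fin m ⊕ Fin (n + 1) →₀ ℕ) :
      monomial μ (1 : k) ∉ I ↔ (Finsupp.sumFinsuppEquivProdFinsupp μ).1 ∈ hD.toFinset := by
    rw [hD.mem_toFinset, Set.mem_ofPred_eq, hG, monomial_one_mem_span_monomial_mapDomain_inl_iff,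
      monomial_one_mem_span_monomial_mapDomain_inl_iff, Finsupp.sumFinsuppEquivProdFinsupp_apply,
      Finsupp.sumFinsuppEquivProdFinsupp_apply, Finsupp.comapDomain_mapDomain _ Sum.inl_injective]
  rw [hilbertFunction_eq_natCard I hmem,
    Nat.card_congr (Equiv.subtypeEquivRight fun μ => and_congr_right' (hdiagram μ)),
    Finsupp.natCard_degree_eq_and_fst_mem]
  refine Finset.sum_congr rfl fun B _ => ?_
  rw [Finsupp.natCard_add_degree_eq, Finsupp.degree_eq_sum]

/-- for a monomial ideal `I_Y` in the variables `x_1,…,x_m` alone with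
radical `(x_1,…,x_m)` and (finite) Young diagram `D`, the Hilbert function of `S/I_Y`,
`S = k[x_1,…,x_m,z_0,…,z_n]`, in degree `d` is `Σ_{B ∈ D} binom(n + d − w_B, n)`,
with `binom(n + e, n) := 0` for `e < 0`; in particular the Hilbert polynomial of `Y` is
`Σ_{B ∈ D} χ(O_{P^n}(d − w_B))`. -/
theorem hilbert_function_eq_sum_over_diagram
    (k : Type*) [Field k] (m n : ℕ)
    (I : Ideal (MvPolynomial (Fin m ⊕ Fin (n + 1)) k))
    (hmono : ∃ G : Set (Fin m →₀ ℕ), I = Ideal.span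
      ((fun p : Fin m →₀ ℕ => monomial (Finsupp.mapDomain Sum.inl p) (1 : k)) '' G))
    (hrad : I.radical = Ideal.span
      (Set.range fun i : Fin m =>
        (X (Sum.inl i) : MvPolynomial (Fin m ⊕ Fin (n + 1)) k)))
    (hD : ({B : Fin m →₀ ℕ |
      monomial (Finsupp.mapDomain Sum.inl B) (1 : k) ∉ I}).Finite) (d : ℕ) :
    hilbertFunction I d =
      ∑ B ∈ hD.toFinset,
        (if (∑ i, B i) ≤ n + d then Nat.choose (n + d - ∑ i, B i) n else 0) :=
  hilbert_function_eq_sum_over_diagram_general k m n I hmono hD d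
end

section
/- Let (a_1 ≥ a_2 ≥ ... ≥ a_s) and (b_1 ≥ ... ≥ b_{s−1}) be sequences of non-negative integers. There exists a two-dimensional Young diagram whose inner corners have weights a_1,...,a_s and whose outer corners have weights b_1,...,b_{s−1} if and only if: (i) there is exactly one more a than b's; (ii) b_i > a_i for all i ≤ s−1 and b_i > a_{i+1} for all i (i.e. b_i > a_i ≥ a_{i+1}); (iii) Σ a_i = Σ b_j. -/
/-- A two-dimensional Young diagram: a finite subset of ℕ² closed under coordinatewise
decrease. -/
def IsYoung2 (T : Set (ℕ × ℕ)) : Prop :=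
  T.Finite ∧ ∀ p ∈ T, ∀ q : ℕ × ℕ, q.1 ≤ p.1 → q.2 ≤ p.2 → q ∈ T

/-- Inner corners of a two-dimensional Young diagram. -/
def innerCorners (T : Set (ℕ × ℕ)) : Set (ℕ × ℕ) :=
  {p | p ∉ T ∧ (p.1 = 0 ∨ (p.1 - 1, p.2) ∈ T) ∧ (p.2 = 0 ∨ (p.1, p.2 - 1) ∈ T)}

/-- Outer corners of a two-dimensional Young diagram. -/
def outerCorners (T : Set (ℕ × ℕ)) : Set (ℕ × ℕ) :=
  {p | 1 ≤ p.1 ∧ 1 ≤ p.2 ∧ (p.1 - 1, p.2) ∉ T ∧ (p.1, p.2 - 1) ∉ T ∧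
    (p.1 - 1, p.2 - 1) ∈ T}

/-!
Listing the inner corners of a Young diagram from left to right as
`(x₀, y₀), …, (xₙ, yₙ)`, one has `0 = x₀ < ⋯ < xₙ` and `y₀ > ⋯ > yₙ = 0`; the diagram is the
set of points lying strictly left of or strictly below every inner corner, and its outer corners
are the points `(xₖ₊₁, yₖ)`. Hence in this order the inner weights `cₖ = xₖ + yₖ` and the outer
weights `dₖ = xₖ₊₁ + yₖ` interlace, `cₖ, cₖ₊₁ < dₖ`, and `∑ c = ∑ d` because `x₀ = yₙ = 0`.
Conversely interlacing weights with equal sums give back such corners through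
`xₖ = ∑_{j<k} (dⱼ - cⱼ)` and `yₖ = cₖ - xₖ`.

Interlacing survives sorting both sequences decreasingly: deleting any index `g` from
`{k | t ≤ cₖ}`, the remaining indices are `g.succAbove j` for distinct `j` with `t < dⱼ`. So at
most one more `c` than `d` reaches the threshold `t`, and none more if some `c` falls below `t`.
-/

open Finset Function

theorem exists_equiv_of_range_eq {α ι κ : Type*} {f : ι → α} {F : κ → α} (hf : Injective f)
    (hF : Injective F) (h : Set.range f = Set.range F) : ∃ σ : ι ≃ κ, ∀ i, f i = F (σ i) :=
  ⟨(Equiv.ofInjective f hf).trans ((Equiv.setCongr h).trans (Equiv.ofInjective F hF).symm),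
    fun i => by simp [Equiv.apply_ofInjective_symm]⟩

theorem Fin.partialSum_last {M : Type*} [AddCommMonoid M] {n : ℕ} (f : Fin n → M) :
    Fin.partialSum f (Fin.last n) = ∑ i, f i := by
  rw [Fin.partialSum, Fin.val_last, List.take_of_length_le (by simp), List.sum_ofFn]

theorem Antitone.eq_of_forall_le_pred {h : ℕ → ℕ} (hh : Antitone h) {x y : ℕ} (hxy : x ≤ y)
    (hflat : ∀ z, x < z → z ≤ y → h (z - 1) ≤ h z) : h y = h x := by
  induction y with
  | zero => rw [Nat.le_zero.1 hxy]
  | succ y ih =>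
    rcases hxy.lt_or_eq with hlt | rfl
    · rw [← ih (by omega) fun z hz hzy => hflat z hz (by omega)]
      exact le_antisymm (hh (Nat.le_succ y)) (hflat (y + 1) hlt le_rfl)
    · rfl

theorem Antitone.le_iff_lt_card_filter {k : ℕ} {w : Fin k → ℕ} (hw : Antitone w) (i : Fin k)
    (t : ℕ) : t ≤ w i ↔ (i : ℕ) < #{j | t ≤ w j} := by
  constructor
  · intro ht
    calc (i : ℕ) < #(Iic i) := by simp [Fin.card_Iic]
      _ ≤ #{j | t ≤ w j} :=
        card_le_card fun j hj => mem_filter.2 ⟨mem_univ _, ht.trans (hw (mem_Iic.1 hj))⟩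
  · intro hlt
    by_contra! ht
    have : #{j | t ≤ w j} ≤ #(Iio i) := card_le_card fun j hj =>
      mem_Iio.2 (lt_of_not_ge fun hij => ((mem_filter.1 hj).2.trans (hw hij)).not_gt ht)
    rw [Fin.card_Iio] at this
    omega

def staircase {m : ℕ} (X Y : Fin m → ℕ) : Set (ℕ × ℕ) :=
  {p | ∀ i, p.1 < X i ∨ p.2 < Y i}

section Staircase

variable {m : ℕ} {X Y : Fin m → ℕ}

theorem isYoung2_staircase {i j : Fin m} (hX : X i = 0) (hY : Y j = 0) :
    IsYoung2 (staircase X Y) := by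
  refine ⟨((Set.finite_Iio (X j)).prod (Set.finite_Iio (Y i))).subset fun p hp => ?_, ?_⟩
  · have := hp i
    have := hp j
    simp only [Set.mem_prod, Set.mem_Iio]
    omega
  · intro p hp q hq₁ hq₂ k
    rcases hp k with h | h <;> omega

theorem injective_staircase_inner (hX : Injective X) : Injective fun i => (X i, Y i) :=
  Injective.of_comp (f := Prod.fst) hX

theorem innerCorners_staircase (hX : StrictMono X) (hY : StrictAnti Y) :
    innerCorners (staircase X Y) = Set.range fun i => (X i, Y i) := by
  ext ⟨x, y⟩
  simp only [innerCorners, staircase, Set.mem_ofPred_eq, Set.mem_range, Prod.mk.injEq]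
  constructor
  · rintro ⟨hout, hleft, hdown⟩
    push Not at hout
    obtain ⟨i, hXi, hYi⟩ := hout
    refine ⟨i, ?_, ?_⟩
    · rcases hleft with h | h
      · omega
      · have := h i
        omega
    · rcases hdown with h | h
      · omega
      · have := h i
        omega
  · rintro ⟨i, rfl, rfl⟩
    refine ⟨fun h => ?_, (Nat.eq_zero_or_pos (X i)).imp_right fun hpos j => ?_,
      (Nat.eq_zero_or_pos (Y i)).imp_right fun hpos j => ?_⟩
    · rcases h i with h | h <;> omega
    · rcases lt_or_ge j i with hji | hij
      · exact Or.inr (hY hji)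
      · have := hX.monotone hij
        omega
    · rcases lt_or_ge i j with hij | hji
      · exact Or.inl (hX hij)
      · have := hY.antitone hji
        omega

end Staircase

section OuterCorners

variable {n : ℕ} {X Y : Fin (n + 1) → ℕ}

theorem injective_staircase_outer (hX : Injective X) :
    Injective fun i : Fin n => (X i.succ, Y i.castSucc) :=
  Injective.of_comp (f := Prod.fst) (hX.comp (Fin.succ_injective n))

theorem outerCorners_staircase (hX : StrictMono X) (hY : StrictAnti Y) :
    outerCorners (staircase X Y) = Set.range fun i : Fin n => (X i.succ, Y i.castSucc) := by
  ext ⟨x, y⟩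
  simp only [outerCorners, staircase, Set.mem_ofPred_eq, Set.mem_range, Prod.mk.injEq]
  constructor
  · rintro ⟨hx, hy, hleft, hdown, hdiag⟩
    push Not at hleft hdown
    obtain ⟨i, hXi, hYi⟩ := hleft
    obtain ⟨j, hXj, hYj⟩ := hdown
    have hYi' : Y i = y := by
      have := hdiag i
      omega
    have hXj' : X j = x := by
      have := hdiag j
      omega
    have hij : i < j := hX.lt_iff_lt.1 (by omega)
    obtain ⟨i, rfl⟩ := Fin.exists_castSucc_eq.2 (hij.trans_le (Fin.le_last j)).ne
    -- an index strictly between `i` and `j` would put `(x - 1, y - 1)` outside the diagram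
    have hj : j = i.succ := by
      refine le_antisymm (not_lt.1 fun hlt => ?_) (Fin.castSucc_lt_iff_succ_le.1 hij)
      have := hdiag i.succ
      have := hX hlt
      have := hY (Fin.castSucc_lt_succ (i := i))
      omega
    exact ⟨i, hj ▸ hXj', hYi'⟩
  · rintro ⟨i, rfl, rfl⟩
    have hXi := hX (Fin.castSucc_lt_succ (i := i))
    have hYi := hY (Fin.castSucc_lt_succ (i := i))
    refine ⟨by omega, by omega, fun h => ?_, fun h => ?_, fun k => ?_⟩
    · have := h i.castSucc
      omega
    · have := h i.succ
      omega
    · rcases le_or_gt k i.castSucc with hk | hk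
      · have := hY.antitone hk
        omega
      · have := hX.monotone (Fin.castSucc_lt_iff_succ_le.1 hk)
        omega

theorem sum_staircase_weights (hX0 : X 0 = 0) (hYl : Y (Fin.last n) = 0) :
    ∑ i, (X i + Y i) = ∑ i : Fin n, (X i.succ + Y i.castSucc) := by
  rw [sum_add_distrib, sum_add_distrib, Fin.sum_univ_succ X, Fin.sum_univ_castSucc Y, hX0, hYl]
  omega

end OuterCorners

def cornerColumns (h : ℕ → ℕ) (N : ℕ) : Finset ℕ :=
  {x ∈ range (N + 1) | x = 0 ∨ h x < h (x - 1)}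

section CornerColumns

variable {h : ℕ → ℕ} {N : ℕ}

theorem zero_mem_cornerColumns : 0 ∈ cornerColumns h N := by
  simp [cornerColumns]

theorem mem_cornerColumns_of_lt (hh : Antitone h) (hN : h N = 0) {x : ℕ} (hx : 0 < x)
    (hlt : h x < h (x - 1)) : x ∈ cornerColumns h N := by
  refine mem_filter.2 ⟨mem_range.2 (not_le.1 fun hNx => ?_), Or.inr hlt⟩
  have := hh (show N ≤ x - 1 by omega)
  omega

theorem eq_of_forall_cornerColumns (hh : Antitone h) (hN : h N = 0) {x y : ℕ} (hxy : x ≤ y)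
    (hJ : ∀ z ∈ cornerColumns h N, x < z → y < z) : h y = h x :=
  hh.eq_of_forall_le_pred hxy fun z hxz hzy => not_lt.1 fun hlt => by
    have := hJ z (mem_cornerColumns_of_lt hh hN (by omega) hlt) hxz
    omega

theorem exists_staircase_of_antitone (hh : Antitone h) (hN : h N = 0) :
    ∃ n, ∃ X Y : Fin (n + 1) → ℕ, StrictMono X ∧ StrictAnti Y ∧ X 0 = 0 ∧
      Y (Fin.last n) = 0 ∧ {p : ℕ × ℕ | p.2 < h p.1} = staircase X Y := by
  set J := cornerColumns h N
  have hJ0 : 0 ∈ J := zero_mem_cornerColumns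
  obtain ⟨n, hn⟩ : ∃ n, #J = n + 1 := Nat.exists_eq_add_one_of_ne_zero (card_ne_zero_of_mem hJ0)
  set X := J.orderEmbOfFin hn
  have hXJ : ∀ i, X i ∈ J := J.orderEmbOfFin_mem hn
  refine ⟨n, X, fun i => h (X i), X.strictMono, fun i j hij => ?_, ?_, ?_, ?_⟩
  · have hXij := X.strictMono hij
    obtain ⟨-, h0 | hlt⟩ := mem_filter.1 (hXJ j)
    · omega
    · exact hlt.trans_le (hh (by omega))
  · exact Nat.le_zero.1 ((orderEmbOfFin_zero hn n.succ_pos).trans_le (J.min'_le 0 hJ0))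
  · have hlast : X (Fin.last n) = J.max' ⟨0, hJ0⟩ := orderEmbOfFin_last hn n.succ_pos
    have hmaxN : J.max' ⟨0, hJ0⟩ ≤ N :=
      Nat.lt_succ_iff.1 (mem_range.1 (mem_filter.1 (J.max'_mem _)).1)
    simp only [hlast]
    rw [← eq_of_forall_cornerColumns hh hN hmaxN fun z hz hlt =>
      absurd hlt (not_lt.2 (J.le_max' z hz)), hN]
  · ext ⟨x, y⟩
    simp only [staircase, Set.mem_ofPred_eq]
    refine ⟨fun hy i => (lt_or_ge x (X i)).imp_right fun hx => hy.trans_le (hh hx),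
      fun hstair => ?_⟩
    -- the last inner corner at or left of column `x`
    set x₀ := (J.filter (· ≤ x)).max' ⟨0, by simp [hJ0]⟩
    have hx₀ : x₀ ∈ J ∧ x₀ ≤ x := mem_filter.1 (max'_mem _ _)
    obtain ⟨i, hi⟩ : x₀ ∈ Set.range X := by rw [range_orderEmbOfFin]; exact hx₀.1
    have hflat : h x = h x₀ := eq_of_forall_cornerColumns hh hN hx₀.2 fun z hz hlt =>
      not_le.1 fun hzx => (le_max' _ z (mem_filter.2 ⟨hz, hzx⟩)).not_gt hlt
    rcases hstair i with h' | h' <;> simp only [hi] at h' <;> omega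

end CornerColumns

noncomputable def colHeight (T : Set (ℕ × ℕ)) (x : ℕ) : ℕ :=
  sInf {y | (x, y) ∉ T}

namespace IsYoung2

variable {T : Set (ℕ × ℕ)}

theorem mem_iff_lt_colHeight (hT : IsYoung2 T) {x y : ℕ} : (x, y) ∈ T ↔ y < colHeight T x := by
  have hne : {y | (x, y) ∉ T}.Nonempty :=
    (hT.1.preimage (Prod.mk_right_injective x).injOn).exists_notMem
  exact ⟨fun hxy => lt_of_not_ge fun hle => Nat.sInf_mem hne (hT.2 _ hxy _ le_rfl hle),
    fun hlt => not_not.1 (Nat.notMem_of_lt_sInf hlt)⟩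

theorem antitone_colHeight (hT : IsYoung2 T) : Antitone (colHeight T) := fun x _ hxx' =>
  le_of_not_gt fun hlt => (lt_irrefl (colHeight T x)) <|
    hT.mem_iff_lt_colHeight.1 (hT.2 _ (hT.mem_iff_lt_colHeight.2 hlt) _ hxx' le_rfl)

theorem exists_colHeight_eq_zero (hT : IsYoung2 T) : ∃ x, colHeight T x = 0 := by
  obtain ⟨x, hx⟩ := (hT.1.preimage (Prod.mk_left_injective 0).injOn).exists_notMem
  exact ⟨x, Nat.eq_zero_of_not_pos fun hpos => hx (hT.mem_iff_lt_colHeight.2 hpos)⟩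

theorem exists_staircase_eq (hT : IsYoung2 T) :
    ∃ n, ∃ X Y : Fin (n + 1) → ℕ, StrictMono X ∧ StrictAnti Y ∧
      X 0 = 0 ∧ Y (Fin.last n) = 0 ∧ T = staircase X Y := by
  obtain ⟨N, hN⟩ := hT.exists_colHeight_eq_zero
  obtain ⟨n, X, Y, hX, hY, hX0, hYl, hXY⟩ := exists_staircase_of_antitone hT.antitone_colHeight hN
  exact ⟨n, X, Y, hX, hY, hX0, hYl,
    Set.ext fun p => hT.mem_iff_lt_colHeight.trans (Set.ext_iff.1 hXY p)⟩

end IsYoung2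

def Interlaces {n : ℕ} (a : Fin (n + 1) → ℕ) (b : Fin n → ℕ) : Prop :=
  ∀ i, a i.castSucc < b i ∧ a i.succ < b i

section Interlaces

variable {n : ℕ} {a : Fin (n + 1) → ℕ} {b : Fin n → ℕ}

theorem interlaces_staircase {X Y : Fin (n + 1) → ℕ} (hX : StrictMono X) (hY : StrictAnti Y) :
    Interlaces (fun i => X i + Y i) (fun i => X i.succ + Y i.castSucc) := fun _ =>
  ⟨Nat.add_lt_add_right (hX Fin.castSucc_lt_succ) _,
    Nat.add_lt_add_left (hY Fin.castSucc_lt_succ) _⟩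

theorem Interlaces.lt_succAbove (hab : Interlaces a b) (g : Fin (n + 1)) (j : Fin n) :
    a (g.succAbove j) < b j := by
  rcases lt_or_ge j.castSucc g with hj | hj
  · rw [Fin.succAbove_of_castSucc_lt g j hj]
    exact (hab j).1
  · rw [Fin.succAbove_of_le_castSucc g j hj]
    exact (hab j).2

theorem Interlaces.card_filter_erase_le (hab : Interlaces a b) (g : Fin (n + 1)) (t : ℕ) :
    #(({i | t ≤ a i} : Finset _).erase g) ≤ #{j | t < b j} := by
  refine (card_le_card fun i hi => ?_).trans (card_image_le (f := g.succAbove))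
  obtain ⟨hig, hi⟩ := mem_erase.1 hi
  obtain ⟨j, rfl⟩ := Fin.exists_succAbove_eq hig
  exact mem_image.2 ⟨j, mem_filter.2 ⟨mem_univ _, (mem_filter.1 hi).2.trans_lt
    (hab.lt_succAbove g j)⟩, rfl⟩

theorem Interlaces.of_rearrangement {m : ℕ} {c : Fin (m + 1) → ℕ} {d : Fin m → ℕ}
    (hcd : Interlaces c d) (σ : Fin (n + 1) ≃ Fin (m + 1)) (τ : Fin n ≃ Fin m)
    (ha : Antitone a) (hb : Antitone b) (hac : ∀ i, a i = c (σ i)) (hbd : ∀ j, b j = d (τ j)) :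
    Interlaces a b := by
  have hcount_a : ∀ t, #{i | t ≤ a i} = #{i | t ≤ c i} := fun t => card_equiv σ (by simp [hac])
  have hcount_b : ∀ t, #{j | t < b j} = #{j | t < d j} := fun t => card_equiv τ (by simp [hbd])
  intro i
  have hbi : #{j | b i < d j} ≤ i := by
    rw [← hcount_b]
    exact not_lt.1 ((hb.le_iff_lt_card_filter i (b i + 1)).not.1 (by omega))
  constructor
  · by_contra! hle
    have hi : (i : ℕ) < #{j | b i ≤ c j} := by
      rw [← hcount_a]
      exact (ha.le_iff_lt_card_filter _ _).1 hle
    by_cases hgap : ∃ g, c g < b i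
    · obtain ⟨g, hg⟩ := hgap
      have := hcd.card_filter_erase_le g (b i)
      rw [erase_eq_of_notMem (by simpa using hg)] at this
      omega
    · push Not at hgap
      have := (hcd (τ i)).1
      have := hgap (τ i).castSucc
      have := hbd i
      omega
  · by_contra! hle
    have hi : (i : ℕ) + 1 < #{j | b i ≤ c j} := by
      rw [← hcount_a]
      exact (ha.le_iff_lt_card_filter i.succ _).1 hle
    have := hcd.card_filter_erase_le 0 (b i)
    have := pred_card_le_card_erase (s := ({j | b i ≤ c j} : Finset _)) (a := 0)
    omega

theorem exists_staircase_of_interlaces (hab : Interlaces a b) (hsum : ∑ i, a i = ∑ j, b j) :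
    ∃ X Y : Fin (n + 1) → ℕ, StrictMono X ∧ StrictAnti Y ∧ X 0 = 0 ∧ Y (Fin.last n) = 0 ∧
      (∀ i, X i + Y i = a i) ∧ ∀ i, X i.succ + Y i.castSucc = b i := by
  set X := Fin.partialSum fun j : Fin n => b j - a j.castSucc
  have hXsucc : ∀ i, X i.succ = X i.castSucc + (b i - a i.castSucc) := Fin.partialSum_succ _
  have hXlast : X (Fin.last n) = a (Fin.last n) := by
    have hsub : ∑ j : Fin n, (b j - a j.castSucc) + ∑ j : Fin n, a j.castSucc = ∑ j, b j := by
      rw [← sum_add_distrib]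
      exact sum_congr rfl fun j _ => Nat.sub_add_cancel (hab j).1.le
    have hX : X (Fin.last n) = ∑ j : Fin n, (b j - a j.castSucc) := Fin.partialSum_last _
    rw [Fin.sum_univ_castSucc] at hsum
    omega
  have hXa : ∀ i, X i ≤ a i := fun i => Fin.reverseInduction (motive := fun i => X i ≤ a i)
    hXlast.le (fun i hi => by have := hXsucc i; have := hab i; omega) i
  refine ⟨X, fun i => a i - X i, Fin.strictMono_iff_lt_succ.2 fun i => ?_,
    Fin.strictAnti_iff_succ_lt.2 fun i => ?_, Fin.partialSum_zero _, by simp [hXlast],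
    fun i => Nat.add_sub_cancel' (hXa i), fun i => ?_⟩ <;>
  · beta_reduce
    have := hXsucc i
    have := hab i
    have := hXa i.castSucc
    have := hXa i.succ
    omega

end Interlaces

/-- a pair of decreasing sequences `(a_1 ≥ … ≥ a_s)`,
`(b_1 ≥ … ≥ b_{s−1})` of non-negative integers arises as the weights of the inner
resp. outer corners of some two-dimensional Young diagram iff `b_i > a_i`,
`b_i > a_{i+1}` for all `i`, and `Σ a_i = Σ b_j`.  (That there is exactly one more
`a` than there are `b`'s is encoded in the index types `Fin s` and `Fin (s-1)`.) -/
theorem young_diagram_corner_weights_characterization (s : ℕ) (hs : 1 ≤ s)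
    (a : Fin s → ℕ) (b : Fin (s - 1) → ℕ) (ha : Antitone a) (hb : Antitone b) :
    (∃ T : Set (ℕ × ℕ), IsYoung2 T ∧
      (∃ f : Fin s → ℕ × ℕ, Function.Injective f ∧ Set.range f = innerCorners T ∧
        ∀ i, (f i).1 + (f i).2 = a i) ∧
      (∃ g : Fin (s - 1) → ℕ × ℕ, Function.Injective g ∧ Set.range g = outerCorners T ∧
        ∀ i, (g i).1 + (g i).2 = b i)) ↔
    ((∀ i : Fin (s - 1), a (Fin.castLE (Nat.sub_le s 1) i) < b i) ∧
     (∀ i : Fin (s - 1), a ⟨i.1 + 1, by have := i.2; omega⟩ < b i) ∧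
     ∑ i, a i = ∑ j, b j) := by
  -- now `Fin (n + 1 - 1)` is `Fin n` and the two conditions read `a i.castSucc < b i`,
  -- `a i.succ < b i` up to definitional unfolding
  obtain ⟨n, rfl⟩ : ∃ n, s = n + 1 := ⟨s - 1, by omega⟩
  constructor
  · rintro ⟨T, hT, ⟨f, hf, hfT, hfa⟩, ⟨g, hg, hgT, hgb⟩⟩
    obtain ⟨m, X, Y, hX, hY, hX0, hYl, rfl⟩ := hT.exists_staircase_eq
    rw [innerCorners_staircase hX hY] at hfT
    rw [outerCorners_staircase hX hY] at hgT
    obtain ⟨σ, hσ⟩ := exists_equiv_of_range_eq hf (injective_staircase_inner hX.injective) hfT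
    obtain ⟨τ, hτ⟩ := exists_equiv_of_range_eq hg (injective_staircase_outer hX.injective) hgT
    have hac : ∀ i, a i = X (σ i) + Y (σ i) := fun i => by rw [← hfa, hσ]
    have hbd : ∀ j, b j = X (τ j).succ + Y (τ j).castSucc := fun j => by rw [← hgb, hτ]
    have hab := (interlaces_staircase hX hY).of_rearrangement σ τ ha hb hac hbd
    refine ⟨fun i => (hab i).1, fun i => (hab i).2, ?_⟩
    calc ∑ i, a i = ∑ i, (X i + Y i) := by
          simp_rw [hac]; exact Equiv.sum_comp σ fun i => X i + Y i
      _ = ∑ j : Fin m, (X j.succ + Y j.castSucc) := sum_staircase_weights hX0 hYl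
      _ = ∑ j, b j := by
          simp_rw [hbd]; exact (Equiv.sum_comp τ fun j => X j.succ + Y j.castSucc).symm
  · rintro ⟨hcast, hsucc, hsum⟩
    obtain ⟨X, Y, hX, hY, hX0, hYl, hXYa, hXYb⟩ :=
      exists_staircase_of_interlaces (fun i => ⟨hcast i, hsucc i⟩) hsum
    exact ⟨staircase X Y, isYoung2_staircase hX0 hYl,
      ⟨_, injective_staircase_inner hX.injective, (innerCorners_staircase hX hY).symm, hXYa⟩,
      ⟨_, injective_staircase_outer hX.injective, (outerCorners_staircase hX hY).symm, hXYb⟩⟩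
end

section
/- Let λ and μ be partitions with sum λ + μ (partswise). For each d, the Hilbert function identity Σ_{B ∈ T(λ+μ)} binom(n + d − w_B, n) = Σ_{B ∈ T(λ)} binom(n + d − w_B, n) + Σ_{B ∈ T(μ)} binom(n + d − w_B, n) − Σ_{B ∈ D(λ,μ)} binom(n − 1 + d − w_B, n − 1) holds, where T(ν) denotes the two-dimensional Young diagram of ν, D(λ,μ) = {(i,j,l) : i < μ_j, l < λ_j} is the associated three-dimensional diagram, w_B is the weight (coordinate sum) of the box B, and binomial coefficients with negative top minus bottom are zero. (Equivalently: Hilb(union) = Hilb(first) + Hilb(second) − Hilb(intersection) for the corresponding monomial multiple structures.) -/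
/-- `χ(O_{P^n}(d − w)) = binom(n + d − w, n)`, interpreted as `0` when `d − w < −n`. -/
def hilbTerm (n d w : ℕ) : ℕ :=
  if w ≤ n + d then Nat.choose (n + d - w) n else 0

/-- The (finite) two-dimensional Young diagram `T(ν) = {(i,j) : i < ν_j}` of a partition
`ν`, realised as a `Finset`; `N` is a bound beyond which `ν` vanishes. -/
def Tfin (nu : ℕ → ℕ) (N : ℕ) : Finset (ℕ × ℕ) :=
  (Finset.range (nu 0 + 1) ×ˢ Finset.range N).filter fun p => p.1 < nu p.2

/-- The three-dimensional diagram `D(λ,μ) = {(i,j,l) : i < μ_j, l < λ_j}` as a `Finset`. -/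
def Dfin (lam mu : ℕ → ℕ) (N : ℕ) : Finset (ℕ × ℕ × ℕ) :=
  (Finset.range (mu 0 + 1) ×ˢ (Finset.range N ×ˢ Finset.range (lam 0 + 1))).filter
    fun p => p.1 < mu p.2.1 ∧ p.2.2 < lam p.2.1


/-!
Both sides split as sums over the columns `j < N`. In column `j` the diagram `T(λ+μ)` has the
boxes `i < λ_j + μ_j`; shifting the boxes `i < μ_j` of `T(μ)` up by `λ_j` and telescoping
Pascal's rule `binom(n+d−w, n) − binom(n+d−w−λ_j, n) = Σ_{l<λ_j} binom(n−1+d−w−l, n−1)`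
box by box produces exactly the boxes `(i, j, l)` of `D(λ,μ)` in that column.
-/

open Finset

-- Pascal's rule; it also holds across the cut-off `w > n + 1 + d`, where the terms vanish.
lemma hilbTerm_succ_eq (n d w : ℕ) :
    hilbTerm (n + 1) d w = hilbTerm (n + 1) d (w + 1) + hilbTerm n d w := by
  unfold hilbTerm
  split_ifs <;> try omega
  · rw [show n + 1 + d - w = (n + d - w) + 1 by omega,
      show n + 1 + d - (w + 1) = n + d - w by omega, Nat.choose_succ_succ', add_comm]
  · rw [show n + 1 + d - w = 0 by omega, Nat.choose_eq_zero_of_lt (by omega)]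

lemma hilbTerm_succ_eq_add_sum (n d w a : ℕ) :
    hilbTerm (n + 1) d w = hilbTerm (n + 1) d (w + a) + ∑ l ∈ range a, hilbTerm n d (w + l) := by
  induction a with
  | zero => simp
  | succ a ih =>
    rw [sum_range_succ, ih, hilbTerm_succ_eq n d (w + a), ← add_assoc]
    ring_nf

lemma sum_hilbTerm_column_add (n d a b j : ℕ) :
    (∑ i ∈ range (a + b), hilbTerm (n + 1) d (i + j)) +
      ∑ i ∈ range b, ∑ l ∈ range a, hilbTerm n d (i + j + l) =
    (∑ i ∈ range a, hilbTerm (n + 1) d (i + j)) + ∑ i ∈ range b, hilbTerm (n + 1) d (i + j) := by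
  have shift : ∀ i ∈ range b, hilbTerm (n + 1) d (i + j) =
      hilbTerm (n + 1) d (a + i + j) + ∑ l ∈ range a, hilbTerm n d (i + j + l) := fun i _ => by
    rw [hilbTerm_succ_eq_add_sum n d (i + j) a]
    ring_nf
  rw [sum_range_add, sum_congr rfl shift, sum_add_distrib]
  ring

lemma sum_Tfin {M : Type*} [AddCommMonoid M] (nu : ℕ → ℕ) (N : ℕ) (hnu : ∀ j, nu j ≤ nu 0)
    (f : ℕ × ℕ → M) :
    ∑ B ∈ Tfin nu N, f B = ∑ j ∈ range N, ∑ i ∈ range (nu j), f (i, j) :=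
  sum_finset_product_right _ _ _ fun p => by
    have := hnu p.2
    simp only [Tfin, mem_filter, mem_product, mem_range]
    omega

lemma sum_Dfin {M : Type*} [AddCommMonoid M] (lam mu : ℕ → ℕ) (N : ℕ)
    (hlam : ∀ j, lam j ≤ lam 0) (hmu : ∀ j, mu j ≤ mu 0) (f : ℕ × ℕ × ℕ → M) :
    ∑ B ∈ Dfin lam mu N, f B =
      ∑ j ∈ range N, ∑ i ∈ range (mu j), ∑ l ∈ range (lam j), f (i, j, l) := by
  rw [sum_finset_product_right (t := fun q => range (mu q.1)) _
      ((range N ×ˢ range (lam 0 + 1)).filter fun q => q.2 < lam q.1),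
    sum_finset_product' (f := fun j l => ∑ i ∈ range (mu j), f (i, j, l)) _ _
      fun j => range (lam j)]
  · exact sum_congr rfl fun j _ => sum_comm
  · intro q
    have := hlam q.1
    simp only [mem_filter, mem_product, mem_range]
    omega
  · intro p
    have := hlam p.2.1
    have := hmu p.2.1
    simp only [Dfin, mem_filter, mem_product, mem_range]
    omega

theorem hilbert_function_of_sum_of_diagrams_general (n : ℕ) (hn : 1 ≤ n)
    (lam mu : ℕ → ℕ) (N : ℕ) (hlam : Antitone lam) (hmu : Antitone mu) (d : ℕ) :
    (∑ B ∈ Tfin (fun j => lam j + mu j) N, (hilbTerm n d (B.1 + B.2) : ℤ)) =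
      (∑ B ∈ Tfin lam N, (hilbTerm n d (B.1 + B.2) : ℤ)) +
      (∑ B ∈ Tfin mu N, (hilbTerm n d (B.1 + B.2) : ℤ)) -
      (∑ B ∈ Dfin lam mu N, (hilbTerm (n - 1) d (B.1 + B.2.1 + B.2.2) : ℤ)) := by
  obtain ⟨m, rfl⟩ : ∃ m, n = m + 1 := ⟨n - 1, by omega⟩
  have hlam_le : ∀ j, lam j ≤ lam 0 := fun j => hlam j.zero_le
  have hmu_le : ∀ j, mu j ≤ mu 0 := fun j => hmu j.zero_le
  rw [Nat.add_sub_cancel, eq_sub_iff_add_eq,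
    sum_Tfin _ N fun j => add_le_add (hlam_le j) (hmu_le j), sum_Tfin lam N hlam_le,
    sum_Tfin mu N hmu_le, sum_Dfin lam mu N hlam_le hmu_le, ← sum_add_distrib, ← sum_add_distrib]
  exact sum_congr rfl fun j _ => mod_cast sum_hilbTerm_column_add m d (lam j) (mu j) j

/-- the Hilbert-function identity
`Hilb(T(λ+μ)) = Hilb(T(λ)) + Hilb(T(μ)) − Hilb(D(λ,μ))` in each degree `d`, where each
box `B` of weight `w_B` contributes `binom(n + d − w_B, n)` to a two-dimensional diagram
in `P^{n+2}` and `binom(n − 1 + d − w_B, n − 1)` to the three-dimensional intersection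
diagram. -/
theorem hilbert_function_of_sum_of_diagrams (n : ℕ) (hn : 1 ≤ n)
    (lam mu : ℕ → ℕ) (N : ℕ) (hlam : Antitone lam) (hmu : Antitone mu)
    (hlam0 : ∀ j, N ≤ j → lam j = 0) (hmu0 : ∀ j, N ≤ j → mu j = 0) (d : ℕ) :
    (∑ B ∈ Tfin (fun j => lam j + mu j) N, (hilbTerm n d (B.1 + B.2) : ℤ)) =
      (∑ B ∈ Tfin lam N, (hilbTerm n d (B.1 + B.2) : ℤ)) +
      (∑ B ∈ Tfin mu N, (hilbTerm n d (B.1 + B.2) : ℤ)) -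
      (∑ B ∈ Dfin lam mu N, (hilbTerm (n - 1) d (B.1 + B.2.1 + B.2.2) : ℤ)) :=
  hilbert_function_of_sum_of_diagrams_general n hn lam mu N hlam hmu d
end
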